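/- arXiv:1601.03199 — 4 statements merged into one kernel-verified Lean document; each statement's English description precedes it below -/
import Mathlib

section
/- Let K > 1 and let r > 0 satisfy the transcendental equation r = Ψ(2Kr), where Ψ(x) = I₁(x)/I₀(x). Then r > √(1 − 1/K). -/
/-!
Write `I_k(x) = (x/2)^k S_k((x/2)^2)` with `S_k(u) = ∑ u^m / (m! (m+k)!)`. The recurrence
`S_0 = u S_2 + S_1` (that is, `I_0 - I_2 = 2 I_1 / x`) and the Turán-type inequality
`S_0 S_2 < S_1^2` give `Ψ(x)^2 > 1 - 2 Ψ(x) / x` for `x ≠ 0`; at `x = 2 K r` with `Ψ(x) = r`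
this is `r^2 > 1 - 1/K`. The Turán inequality holds coefficientwise: by Vandermonde's identity the
`n`-th Cauchy coefficients of `S_0 S_2` and `S_1^2` are `C(2n+2, n)` and `C(2n+2, n+1)` divided by
`n! (n+2)!`, and the middle binomial coefficient is the largest.
-/

open Real Filter Topology

/-- The modified Bessel function of the first kind of real order `ν`. -/
noncomputable def besselI (ν x : ℝ) : ℝ :=
  ∑' m : ℕ, (x / 2) ^ (2 * (m : ℝ) + ν) / ((m.factorial : ℝ) * Real.Gamma ((m : ℝ) + ν + 1))

/-- `Ψ_ν(x) = I_{ν+1}(x) / I_ν(x)`. -/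
noncomputable def psi (ν x : ℝ) : ℝ := besselI (ν + 1) x / besselI ν x

open Finset
open scoped Nat

theorem Nat.sum_range_choose_mul_choose_add (n p i : ℕ) :
    ∑ m ∈ range (n + 1), n.choose m * p.choose (m + i) = (n + p).choose (n + i) := by
  rw [Nat.add_choose_eq,
    Nat.sum_antidiagonal_eq_sum_range_succ (fun a b => n.choose a * p.choose b),
    show (n + i).succ = n + 1 + i by omega,
    sum_range_add (fun k => n.choose k * p.choose (n + i - k)),
    sum_eq_zero (s := range i) fun k _ => by rw [Nat.choose_eq_zero_of_lt (by omega), zero_mul],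
    add_zero, ← sum_range_reflect]
  refine sum_congr rfl fun m hm => ?_
  have hm : m ≤ n := Nat.lt_succ_iff.mp (mem_range.mp hm)
  rw [Nat.add_sub_cancel, Nat.choose_symm hm, show n - m + i = n + i - m by omega]

theorem hasSum_sum_range_mul_mul_pow {R : Type*} [NormedCommRing R] [CompleteSpace R]
    {a b : ℕ → R} {u : R} (ha : Summable fun m => ‖a m * u ^ m‖)
    (hb : Summable fun m => ‖b m * u ^ m‖) :
    HasSum (fun n => (∑ m ∈ range (n + 1), a m * b (n - m)) * u ^ n)
      ((∑' m, a m * u ^ m) * ∑' m, b m * u ^ m) := by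
  have hterm : ∀ n, (∑ m ∈ range (n + 1), a m * b (n - m)) * u ^ n
      = ∑ m ∈ range (n + 1), a m * u ^ m * (b (n - m) * u ^ (n - m)) := fun n => by
    rw [sum_mul]
    refine sum_congr rfl fun m hm => ?_
    rw [← pow_mul_pow_sub u (Nat.lt_succ_iff.mp (mem_range.mp hm))]
    ring
  simp_rw [hterm]
  rw [tsum_mul_tsum_eq_tsum_sum_range_of_summable_norm ha hb]
  exact (summable_norm_sum_mul_range_of_summable_norm ha hb).of_norm.hasSum

noncomputable def besselCoeff (k m : ℕ) : ℝ := ((m ! : ℝ) * (m + k)!)⁻¹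

noncomputable def besselSeries (k : ℕ) (u : ℝ) : ℝ := ∑' m, besselCoeff k m * u ^ m

lemma besselCoeff_pos (k m : ℕ) : 0 < besselCoeff k m := by
  unfold besselCoeff; positivity

lemma summable_norm_besselCoeff_mul_pow (k : ℕ) (u : ℝ) :
    Summable fun m => ‖besselCoeff k m * u ^ m‖ := by
  refine Summable.of_nonneg_of_le (fun _ => norm_nonneg _) (fun m => ?_)
    (Real.summable_pow_div_factorial |u|)
  rw [norm_mul, norm_pow, Real.norm_eq_abs, Real.norm_eq_abs, abs_of_pos (besselCoeff_pos k m),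
    div_eq_inv_mul]
  gcongr
  rw [besselCoeff]
  gcongr
  exact le_mul_of_one_le_right (by positivity) (by exact_mod_cast (m + k).factorial_pos)

lemma summable_besselCoeff_mul_pow (k : ℕ) (u : ℝ) :
    Summable fun m => besselCoeff k m * u ^ m :=
  (summable_norm_besselCoeff_mul_pow k u).of_norm

lemma besselSeries_pos (k : ℕ) {u : ℝ} (hu : 0 ≤ u) : 0 < besselSeries k u :=
  (summable_besselCoeff_mul_pow k u).tsum_pos
    (fun m => mul_nonneg (besselCoeff_pos k m).le (pow_nonneg hu m)) 0
    (by simpa using besselCoeff_pos k 0)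

lemma besselI_natCast (k : ℕ) (x : ℝ) :
    besselI k x = (x / 2) ^ k * besselSeries k ((x / 2) ^ 2) := by
  rw [besselI, besselSeries, ← tsum_mul_left]
  refine tsum_congr fun m => ?_
  rw [show 2 * (m : ℝ) + k = ((2 * m + k : ℕ) : ℝ) by push_cast; ring, Real.rpow_natCast,
    show (m : ℝ) + k + 1 = ((m + k : ℕ) : ℝ) + 1 by push_cast; ring,
    Real.Gamma_nat_eq_factorial, besselCoeff, pow_add, pow_mul]
  ring

lemma besselCoeff_zero_succ_sub_one_succ (m : ℕ) :
    besselCoeff 0 (m + 1) - besselCoeff 1 (m + 1) = besselCoeff 2 m := by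
  simp only [besselCoeff, add_zero, show m + 1 + 1 = m + 2 by rfl, Nat.factorial_succ (m + 1),
    Nat.factorial_succ m]
  push_cast
  field_simp
  ring

lemma besselSeries_zero_eq (u : ℝ) :
    besselSeries 0 u = u * besselSeries 2 u + besselSeries 1 u := by
  have hsum := (summable_besselCoeff_mul_pow 0 u).sub (summable_besselCoeff_mul_pow 1 u)
  rw [← sub_eq_iff_eq_add, besselSeries, besselSeries, besselSeries,
    ← (summable_besselCoeff_mul_pow 0 u).tsum_sub (summable_besselCoeff_mul_pow 1 u),
    hsum.tsum_eq_zero_add, ← tsum_mul_left, show besselCoeff 0 0 = besselCoeff 1 0 by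
      simp [besselCoeff], sub_self, zero_add]
  refine tsum_congr fun m => ?_
  rw [← sub_mul, besselCoeff_zero_succ_sub_one_succ]
  ring

lemma besselCoeff_mul_besselCoeff_sub (i j : ℕ) {n m : ℕ} (hm : m ≤ n) :
    besselCoeff i m * besselCoeff j (n - m)
      = (n.choose m * (n + i + j).choose (m + i) : ℕ) / ((n ! : ℝ) * (n + i + j)!) := by
  have e1 : (n.choose m : ℝ) * m ! * (n - m)! = n ! := by
    exact_mod_cast Nat.choose_mul_factorial_mul_factorial hm
  have e2 : ((n + i + j).choose (m + i) : ℝ) * (m + i)! * (n - m + j)! = (n + i + j)! := by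
    rw [show n - m + j = n + i + j - (m + i) by omega]
    exact_mod_cast Nat.choose_mul_factorial_mul_factorial (by omega)
  have c1 : (n.choose m : ℝ) ≠ 0 := by exact_mod_cast (Nat.choose_pos hm).ne'
  have c2 : ((n + i + j).choose (m + i) : ℝ) ≠ 0 := by
    exact_mod_cast (Nat.choose_pos (by omega)).ne'
  rw [besselCoeff, besselCoeff, ← e1, ← e2]
  push_cast
  field_simp

lemma sum_besselCoeff_mul_besselCoeff_sub (i j n : ℕ) :
    ∑ m ∈ range (n + 1), besselCoeff i m * besselCoeff j (n - m)
      = (2 * n + i + j).choose (n + i) / ((n ! : ℝ) * (n + i + j)!) := by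
  rw [sum_congr rfl fun m hm =>
      besselCoeff_mul_besselCoeff_sub i j (Nat.lt_succ_iff.mp (mem_range.mp hm)),
    ← sum_div, ← Nat.cast_sum, Nat.sum_range_choose_mul_choose_add,
    show n + (n + i + j) = 2 * n + i + j by ring]

lemma sum_besselCoeff_zero_mul_two_le (n : ℕ) :
    ∑ m ∈ range (n + 1), besselCoeff 0 m * besselCoeff 2 (n - m)
      ≤ ∑ m ∈ range (n + 1), besselCoeff 1 m * besselCoeff 1 (n - m) := by
  rw [sum_besselCoeff_mul_besselCoeff_sub, sum_besselCoeff_mul_besselCoeff_sub]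
  gcongr
  have := Nat.choose_le_middle n (2 * n + 2)
  rwa [show (2 * n + 2) / 2 = n + 1 by omega] at this

lemma besselSeries_zero_mul_two_lt_sq {u : ℝ} (hu : 0 ≤ u) :
    besselSeries 0 u * besselSeries 2 u < besselSeries 1 u ^ 2 := by
  refine hasSum_lt (i := 0) (fun n => ?_) ?_
    (hasSum_sum_range_mul_mul_pow (summable_norm_besselCoeff_mul_pow 0 u)
      (summable_norm_besselCoeff_mul_pow 2 u))
    (sq (besselSeries 1 u) ▸ hasSum_sum_range_mul_mul_pow (summable_norm_besselCoeff_mul_pow 1 u)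
      (summable_norm_besselCoeff_mul_pow 1 u))
  · exact mul_le_mul_of_nonneg_right (sum_besselCoeff_zero_mul_two_le n) (pow_nonneg hu n)
  · norm_num [besselCoeff]

lemma one_sub_two_mul_psi_zero_div_lt_sq {x : ℝ} (hx : x ≠ 0) :
    1 - 2 * psi 0 x / x < psi 0 x ^ 2 := by
  set y := x / 2
  set u := y ^ 2 with hu_def
  have hy : y ≠ 0 := by positivity
  have hu : 0 < u := by positivity
  have hS0 := besselSeries_pos 0 hu.le
  have hpsi : psi 0 x = y * besselSeries 1 u / besselSeries 0 u := by
    have h0 := besselI_natCast 0 x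
    have h1 := besselI_natCast 1 x
    push_cast at h0 h1
    rw [psi, zero_add, h0, h1, pow_one, pow_zero, one_mul]
  have hratio : 2 * psi 0 x / x = besselSeries 1 u / besselSeries 0 u := by
    rw [hpsi, show x = 2 * y by ring]
    field_simp
  have hturan : besselSeries 0 u * (besselSeries 0 u - besselSeries 1 u)
      < u * besselSeries 1 u ^ 2 :=
    calc besselSeries 0 u * (besselSeries 0 u - besselSeries 1 u)
        = u * (besselSeries 0 u * besselSeries 2 u) := by rw [besselSeries_zero_eq u]; ring
      _ < u * besselSeries 1 u ^ 2 :=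
        mul_lt_mul_of_pos_left (besselSeries_zero_mul_two_lt_sq hu.le) hu
  rw [hratio, hpsi, div_pow, mul_pow, ← hu_def, one_sub_div hS0.ne',
    div_lt_div_iff₀ hS0 (by positivity)]
  nlinarith

theorem stmt_0 (K r : ℝ) (hK : 1 < K) (hr : 0 < r)
    (heq : r = psi 0 (2 * K * r)) :
    Real.sqrt (1 - 1 / K) < r := by
  have hx : 2 * K * r ≠ 0 := by positivity
  have h := one_sub_two_mul_psi_zero_div_lt_sq hx
  rw [← heq, show 2 * r / (2 * K * r) = 1 / K by field_simp] at h
  exact (Real.sqrt_lt' hr).mpr h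
end

section
/- For all x > 0 one has Ψ²(x) + Ψ(x)/x − 1 < 0, where Ψ(x) = I₁(x)/I₀(x). Consequently, if K > 1 and r > 0 satisfies r = Ψ(2Kr), then r < √(1 − 1/(2K)). -/
open Real Filter Topology

/-!
Writing `x = 2y`, the series `I₀(2y) = ∑ y^(2m) / m!²` and
`I₁(2y) = ∑ y^(2m+1) / (m! (m+1)!)` multiply, by the Cauchy product and Vandermonde's
identity, to
`I_a I_b = ∑ₙ y^(2n+a+b) C(2n+a+b, n) / ((n+a)! (n+b)!)`.
In `I₀² - I₁² - I₀ I₁ / (2y)` the coefficient of `y^0` is `1/2` and every coefficient of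
`y^(2n+2)` is nonnegative, which comes down to
`2(n+2) C(2n+2, n) + C(2n+3, n+1) ≤ 2(n+2) C(2n+2, n+1)`.
Dividing by `I₀²` gives the first claim; at the fixed point `r = Ψ(2Kr)` it reads
`r² + 1/(2K) - 1 < 0`.
-/

open Finset Nat

noncomputable def besselITerm (a : ℕ) (y : ℝ) (m : ℕ) : ℝ :=
  y ^ (2 * m + a) / (m ! * (m + a)!)

noncomputable def besselMulCoeff (a b n : ℕ) : ℝ :=
  ((2 * n + a + b).choose n : ℝ) / ((n + a)! * (n + b)!)

lemma besselI_natCast_s1 (a : ℕ) (x : ℝ) : besselI a x = ∑' m, besselITerm a (x / 2) m := by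
  refine tsum_congr fun m => ?_
  rw [besselITerm, show 2 * (m : ℝ) + a = ((2 * m + a : ℕ) : ℝ) by push_cast; ring,
    rpow_natCast, show (m : ℝ) + a + 1 = ((m + a : ℕ) : ℝ) + 1 by push_cast; ring,
    Gamma_nat_eq_factorial]

lemma summable_norm_besselITerm (a : ℕ) (y : ℝ) :
    Summable fun m => ‖besselITerm a y m‖ := by
  refine .of_nonneg_of_le (fun _ => norm_nonneg _) (fun m => ?_)
    ((summable_pow_div_factorial (y ^ 2)).mul_left (|y| ^ a))
  have h1 : (1 : ℝ) ≤ (m + a)! := by exact_mod_cast (m + a).factorial_pos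
  rw [besselITerm, norm_div, norm_pow, Real.norm_eq_abs, pow_add, pow_mul, sq_abs,
    Real.norm_of_nonneg (by positivity), mul_div_assoc', mul_comm (|y| ^ a)]
  gcongr
  exact le_mul_of_one_le_right (by positivity) h1

lemma sum_antidiagonal_besselITerm_mul (a b : ℕ) (y : ℝ) (n : ℕ) :
    ∑ p ∈ antidiagonal n, besselITerm a y p.1 * besselITerm b y p.2
      = y ^ (2 * n + a + b) * besselMulCoeff a b n := by
  rw [besselMulCoeff, show 2 * n + a + b = (n + b) + (n + a) by ring, add_choose_eq,
    Nat.cast_sum, sum_div, mul_sum]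
  refine sum_congr rfl fun ⟨i, j⟩ hij => ?_
  obtain rfl : i + j = n := HasAntidiagonal.mem_antidiagonal.mp hij
  dsimp only
  rw [Nat.cast_mul, Nat.cast_choose ℝ (by omega : i ≤ i + j + b),
    Nat.cast_choose ℝ (by omega : j ≤ i + j + a), show i + j + b - i = j + b by omega,
    show i + j + a - j = i + a by omega, besselITerm, besselITerm,
    show i + j + b + (i + j + a) = (2 * i + a) + (2 * j + b) by ring, pow_add]
  field_simp
  ring

lemma hasSum_besselMulCoeff (a b : ℕ) (y : ℝ) :
    HasSum (fun n => y ^ (2 * n + a + b) * besselMulCoeff a b n)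
      ((∑' m, besselITerm a y m) * ∑' m, besselITerm b y m) := by
  have hf := summable_norm_besselITerm a y
  have hg := summable_norm_besselITerm b y
  have key := (summable_norm_sum_mul_antidiagonal_of_summable_norm hf hg).of_norm.hasSum
  rw [← tsum_mul_tsum_eq_tsum_sum_antidiagonal_of_summable_norm hf hg] at key
  simpa only [sum_antidiagonal_besselITerm_mul] using key

lemma two_mul_choose_add_choose_le (n : ℕ) :
    2 * (n + 2) * (2 * n + 2).choose n + (2 * n + 3).choose (n + 1)
      ≤ 2 * (n + 2) * (2 * n + 2).choose (n + 1) := by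
  have hc := choose_succ_right_eq (2 * n + 2) n
  rw [show 2 * n + 2 - n = n + 2 by omega] at hc
  have hd : (2 * n + 3).choose (n + 1) = (2 * n + 2).choose n + (2 * n + 2).choose (n + 1) :=
    choose_succ_succ (2 * n + 2) n
  nlinarith

lemma besselMulCoeff_one_one_add_half_le (n : ℕ) :
    besselMulCoeff 1 1 n + besselMulCoeff 0 1 (n + 1) / 2 ≤ besselMulCoeff 0 0 (n + 1) := by
  have key : 2 * (n + 2) * ((2 * n + 2).choose n : ℝ) + (2 * n + 3).choose (n + 1)
      ≤ 2 * (n + 2) * (2 * n + 2).choose (n + 1) := by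
    exact_mod_cast two_mul_choose_add_choose_le n
  have hF : ((n + 2)! : ℝ) = (n + 2) * (n + 1)! := by push_cast [factorial_succ]; ring
  simp only [besselMulCoeff, add_zero, show 2 * n + 1 + 1 = 2 * n + 2 by ring,
    show 2 * (n + 1) = 2 * n + 2 by ring, show 2 * n + 2 + 1 = 2 * n + 3 by ring, hF]
  field_simp
  linarith

lemma besselI_one_sq_add_mul_div_lt {x : ℝ} (hx : x ≠ 0) :
    besselI 1 x ^ 2 + besselI 0 x * besselI 1 x / x < besselI 0 x ^ 2 := by
  obtain ⟨y, rfl⟩ : ∃ y, x = 2 * y := ⟨x / 2, by ring⟩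
  have hy : y ≠ 0 := right_ne_zero_of_mul hx
  have hI0 : besselI 0 (2 * y) = ∑' m, besselITerm 0 y m := by
    simpa using besselI_natCast_s1 0 (2 * y)
  have hI1 : besselI 1 (2 * y) = ∑' m, besselITerm 1 y m := by
    simpa using besselI_natCast_s1 1 (2 * y)
  have h00 := (hasSum_nat_add_iff' 1).mpr (hasSum_besselMulCoeff 0 0 y)
  have h01 := ((hasSum_nat_add_iff' 1).mpr (hasSum_besselMulCoeff 0 1 y)).div_const (2 * y)
  have h11 := hasSum_besselMulCoeff 1 1 y
  have hle := hasSum_le (fun n => ?_) (h11.add h01) h00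
  · have e00 : besselMulCoeff 0 0 0 = 1 := by simp [besselMulCoeff]
    have e01 : besselMulCoeff 0 1 0 = 1 := by simp [besselMulCoeff]
    simp only [range_one, sum_singleton, mul_zero, add_zero, zero_add, pow_zero, pow_one, mul_one,
      e00, e01, ← hI0, ← hI1] at hle
    rw [sub_div, div_mul_cancel_right₀ hy] at hle
    rw [sq, sq]
    linarith
  · calc y ^ (2 * n + 1 + 1) * besselMulCoeff 1 1 n
          + y ^ (2 * (n + 1) + 0 + 1) * besselMulCoeff 0 1 (n + 1) / (2 * y)
        = (y ^ 2) ^ (n + 1) * (besselMulCoeff 1 1 n + besselMulCoeff 0 1 (n + 1) / 2) := by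
          field_simp
          ring
      _ ≤ (y ^ 2) ^ (n + 1) * besselMulCoeff 0 0 (n + 1) := by
          gcongr
          exact besselMulCoeff_one_one_add_half_le n
      _ = y ^ (2 * (n + 1) + 0 + 0) * besselMulCoeff 0 0 (n + 1) := by ring

lemma psi_zero_sq_add_div_sub_one_neg {x : ℝ} (hx : x ≠ 0) :
    psi 0 x ^ 2 + psi 0 x / x - 1 < 0 := by
  have key := besselI_one_sq_add_mul_div_lt hx
  have hI0 : besselI 0 x ≠ 0 := by
    intro h
    rw [h, zero_mul, zero_div, add_zero] at key
    nlinarith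
  have : psi 0 x ^ 2 + psi 0 x / x - 1
      = (besselI 1 x ^ 2 + besselI 0 x * besselI 1 x / x - besselI 0 x ^ 2) / besselI 0 x ^ 2 := by
    rw [psi, zero_add]
    field_simp
  rw [this]
  exact div_neg_of_neg_of_pos (by linarith) (by positivity)

theorem stmt_1 :
    (∀ x : ℝ, 0 < x → (psi 0 x) ^ 2 + psi 0 x / x - 1 < 0) ∧
    (∀ K r : ℝ, 1 < K → 0 < r → r = psi 0 (2 * K * r) →
      r < Real.sqrt (1 - 1 / (2 * K))) := by
  refine ⟨fun x hx => psi_zero_sq_add_div_sub_one_neg hx.ne', fun K r hK hr hfix => ?_⟩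
  have h := psi_zero_sq_add_div_sub_one_neg (x := 2 * K * r) (by positivity)
  rw [← hfix, show r / (2 * K * r) = 1 / (2 * K) by field_simp] at h
  exact (lt_sqrt hr.le).mpr (by linarith)
end

section
/- For all x > 0 the Turán type inequality I₁⁴(x) < I₀³(x)·I₂(x) holds. -/
open Real Filter Topology

/-! With `t = x / 2` and `wₙ = catalan n * t ^ (2 n) / (n!)²`, Vandermonde's identity turns the
Cauchy products of the Bessel series into `I₀² = ∑ (n + 1) wₙ`, `I₁² = ∑ n wₙ` and
`I₀ I₂ = ∑ n² / (n + 1) wₙ`. The inequality `I₁⁴ < I₀² · I₀ I₂` is then Cauchy–Schwarz for the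
weights `wₙ` and the sequences `√(n + 1)`, `n / √(n + 1)`, which is strict because these are not
proportional while `w₀` and `w₁` are positive. -/

open Finset
open scoped Nat

lemma sq_lt_mul_of_hasSum {w : ℕ → ℝ} {S M R : ℝ} (hw : ∀ n, 0 ≤ w n) (hw₀ : 0 < w 0)
    (hw₁ : 0 < w 1) (hS : HasSum (fun n : ℕ => ((n : ℝ) + 1) * w n) S)
    (hM : HasSum (fun n : ℕ => (n : ℝ) * w n) M)
    (hR : HasSum (fun n : ℕ => (n : ℝ) ^ 2 / (n + 1) * w n) R) : M ^ 2 < S * R := by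
  have hM_pos : 0 < M :=
    hasSum_lt (f := 0) (i := 1) (fun n => by have := hw n; simp only [Pi.zero_apply]; positivity)
      (by simpa using hw₁) hasSum_zero hM
  have hS_nonneg : 0 ≤ S := hS.nonneg fun n => by have := hw n; positivity
  -- expanding the square gives `M² S - 2 M S M + S² R`; the `n = 0` term is `M² w₀ > 0`
  have hsq : HasSum (fun n : ℕ => ((n + 1) * M - n * S) ^ 2 / (n + 1) * w n)
      (S * (S * R - M ^ 2)) := by
    have h := ((hS.mul_left (M ^ 2)).sub (hM.mul_left (2 * M * S))).add (hR.mul_left (S ^ 2))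
    rw [show M ^ 2 * S - 2 * M * S * M + S ^ 2 * R = S * (S * R - M ^ 2) by ring] at h
    refine h.congr_fun fun n => ?_
    field_simp
    ring
  have hpos : 0 < S * (S * R - M ^ 2) :=
    hasSum_lt (f := 0) (i := 0) (fun n => by have := hw n; simp only [Pi.zero_apply]; positivity)
      (by simpa using mul_pos (pow_pos hM_pos 2) hw₀) hasSum_zero hsq
  exact sub_pos.mp (pos_of_mul_pos_right hpos hS_nonneg)

noncomputable def besselTerm (p : ℕ) (t : ℝ) (n : ℕ) : ℝ :=
  t ^ (2 * n + p) / (n ! * (n + p)! : ℝ)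

lemma besselI_natCast_eq_tsum (p : ℕ) (x : ℝ) :
    besselI p x = ∑' n, besselTerm p (x / 2) n := by
  refine tsum_congr fun n => ?_
  rw [show 2 * (n : ℝ) + p = ((2 * n + p : ℕ) : ℝ) by push_cast; ring, Real.rpow_natCast,
    show (n : ℝ) + p + 1 = ((n + p : ℕ) : ℝ) + 1 by push_cast; ring, Real.Gamma_nat_eq_factorial]
  rfl

lemma norm_besselTerm_le (p : ℕ) (t : ℝ) (n : ℕ) :
    ‖besselTerm p t n‖ ≤ |t| ^ p * ((t ^ 2) ^ n / n !) := by
  have h1 : (1 : ℝ) ≤ (n + p)! := by exact_mod_cast (n + p).factorial_pos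
  have h2 : (0 : ℝ) < n ! := by exact_mod_cast n.factorial_pos
  rw [besselTerm, norm_div, norm_pow, Real.norm_eq_abs, mul_div_assoc', pow_add, pow_mul, sq_abs,
    mul_comm (|t| ^ p), Real.norm_of_nonneg (by positivity)]
  gcongr
  exact le_mul_of_one_le_right h2.le h1

lemma summable_norm_besselTerm (p : ℕ) (t : ℝ) : Summable fun n => ‖besselTerm p t n‖ :=
  ((Real.summable_pow_div_factorial (t ^ 2)).mul_left _).of_nonneg_of_le
    (fun _ => norm_nonneg _) (norm_besselTerm_le p t)

lemma besselTerm_mul_besselTerm (p q : ℕ) (t : ℝ) (i j : ℕ) :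
    besselTerm p t i * besselTerm q t j =
      ((i + j + q).choose i * (i + j + p).choose j : ℕ) *
        (t ^ (2 * (i + j) + p + q) / ((i + j + p)! * (i + j + q)! : ℝ)) := by
  have hq : ((i + j + q).choose i : ℝ) * (j + q)! * i ! = (i + j + q)! := by
    rw [show i + j + q = (j + q) + i by ring]
    exact_mod_cast Nat.add_choose_mul_factorial_mul_factorial (j + q) i
  have hp : ((i + j + p).choose j : ℝ) * (i + p)! * j ! = (i + j + p)! := by
    rw [show i + j + p = (i + p) + j by ring]
    exact_mod_cast Nat.add_choose_mul_factorial_mul_factorial (i + p) j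
  rw [besselTerm, besselTerm, ← hq, ← hp]
  have : (i + j + q).choose i ≠ 0 := (Nat.choose_pos (by omega)).ne'
  have : (i + j + p).choose j ≠ 0 := (Nat.choose_pos (by omega)).ne'
  push_cast
  field_simp
  ring

lemma sum_antidiagonal_besselTerm_mul (p q : ℕ) (t : ℝ) (n : ℕ) :
    ∑ kl ∈ antidiagonal n, besselTerm p t kl.1 * besselTerm q t kl.2 =
      (2 * n + p + q).choose n * t ^ (2 * n + p + q) / ((n + p)! * (n + q)! : ℝ) := by
  have hvdm := Nat.add_choose_eq (n + q) (n + p) n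
  rw [show n + q + (n + p) = 2 * n + p + q by ring] at hvdm
  rw [hvdm, Nat.cast_sum, Finset.sum_mul, Finset.sum_div]
  refine Finset.sum_congr rfl fun ⟨i, j⟩ hij => ?_
  rw [HasAntidiagonal.mem_antidiagonal] at hij
  subst hij
  rw [besselTerm_mul_besselTerm, mul_div_assoc]

lemma hasSum_besselI_mul_besselI (p q : ℕ) (x : ℝ) :
    HasSum (fun n => ((2 * n + p + q).choose n : ℝ) * (x / 2) ^ (2 * n + p + q) /
      ((n + p)! * (n + q)! : ℝ)) (besselI p x * besselI q x) := by
  have hp := summable_norm_besselTerm p (x / 2)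
  have hq := summable_norm_besselTerm q (x / 2)
  simp_rw [besselI_natCast_eq_tsum, tsum_mul_tsum_eq_tsum_sum_antidiagonal_of_summable_norm hp hq,
    ← sum_antidiagonal_besselTerm_mul]
  exact (summable_norm_sum_mul_antidiagonal_of_summable_norm hp hq).of_norm.hasSum

lemma two_mul_choose_eq_succ_mul_catalan (n : ℕ) : (2 * n).choose n = (n + 1) * catalan n := by
  rw [succ_mul_catalan_eq_centralBinom, Nat.centralBinom_eq_two_mul_choose]

lemma two_mul_add_two_choose_eq_succ_mul_catalan (n : ℕ) :
    (2 * n + 2).choose n = (n + 1) * catalan (n + 1) := by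
  have hsucc := Nat.choose_succ_right_eq (2 * n + 2) n
  rw [show 2 * n + 2 - n = n + 2 by omega] at hsucc
  have hcat : (n + 2) * catalan (n + 1) = (2 * n + 2).choose (n + 1) :=
    (succ_mul_catalan_eq_centralBinom (n + 1)).trans (Nat.centralBinom_eq_two_mul_choose _)
  apply Nat.eq_of_mul_eq_mul_left (show 0 < n + 2 by omega)
  rw [mul_comm, ← hsucc, ← hcat]
  ring

noncomputable def catalanTerm (t : ℝ) (n : ℕ) : ℝ :=
  catalan n * t ^ (2 * n) / (n ! : ℝ) ^ 2

lemma catalanTerm_nonneg (t : ℝ) (n : ℕ) : 0 ≤ catalanTerm t n := by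
  rw [catalanTerm, pow_mul]
  positivity

lemma hasSum_besselI_zero_sq (x : ℝ) :
    HasSum (fun n : ℕ => ((n : ℝ) + 1) * catalanTerm (x / 2) n) (besselI 0 x ^ 2) := by
  have h := hasSum_besselI_mul_besselI 0 0 x
  simp only [Nat.cast_zero, add_zero, ← sq] at h
  refine h.congr_fun fun n => ?_
  rw [catalanTerm, two_mul_choose_eq_succ_mul_catalan]
  push_cast
  ring

lemma hasSum_besselI_one_sq (x : ℝ) :
    HasSum (fun n : ℕ => (n : ℝ) * catalanTerm (x / 2) n) (besselI 1 x ^ 2) := by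
  have h := hasSum_besselI_mul_besselI 1 1 x
  rw [Nat.cast_one, ← sq] at h
  rw [← hasSum_nat_add_iff' 1]
  simp only [range_one, sum_singleton, CharP.cast_eq_zero, zero_mul, sub_zero]
  refine h.congr_fun fun n => ?_
  rw [catalanTerm, show 2 * n + 1 + 1 = 2 * n + 2 by ring,
    two_mul_add_two_choose_eq_succ_mul_catalan]
  push_cast
  ring

lemma hasSum_besselI_zero_mul_besselI_two (x : ℝ) :
    HasSum (fun n : ℕ => (n : ℝ) ^ 2 / (n + 1) * catalanTerm (x / 2) n)
      (besselI 0 x * besselI 2 x) := by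
  have h := hasSum_besselI_mul_besselI 0 2 x
  simp only [Nat.cast_zero, Nat.cast_ofNat, add_zero] at h
  rw [← hasSum_nat_add_iff' 1]
  simp only [range_one, sum_singleton, CharP.cast_eq_zero, zero_pow two_ne_zero, zero_div,
    zero_mul, sub_zero]
  refine h.congr_fun fun n => ?_
  rw [catalanTerm, two_mul_add_two_choose_eq_succ_mul_catalan, Nat.factorial_succ (n + 1),
    Nat.factorial_succ n]
  push_cast
  field_simp
  ring

theorem stmt_5 (x : ℝ) (hx : 0 < x) :
    (besselI 1 x) ^ 4 < (besselI 0 x) ^ 3 * besselI 2 x := by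
  have key := sq_lt_mul_of_hasSum (catalanTerm_nonneg (x / 2)) (by simp [catalanTerm])
    (by simp [catalanTerm]; positivity) (hasSum_besselI_zero_sq x) (hasSum_besselI_one_sq x)
    (hasSum_besselI_zero_mul_besselI_two x)
  calc besselI 1 x ^ 4 = (besselI 1 x ^ 2) ^ 2 := by ring
    _ < besselI 0 x ^ 2 * (besselI 0 x * besselI 2 x) := key
    _ = besselI 0 x ^ 3 * besselI 2 x := by ring
end

section
/- For all ν ≥ 0 and all x > 0 the Turán type inequality I_{ν+1}²(x) − I_ν(x)·I_{ν+2}(x) < ((2ν+1)/x)·I_ν(x)·I_{ν+1}(x) holds. -/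
open Real Filter Topology

/-!
Multiplying the series of `I_a` and `I_b` and summing the Cauchy product with the
Chu–Vandermonde identity gives `I_a(x) I_b(x) = ∑ₙ c_n(a,b) (x/2)^(2n+a+b)` with
`c_n(a,b) = Γ(2n+a+b+1) / (n! Γ(n+a+1) Γ(n+b+1) Γ(n+a+b+1))`. After dividing by
`(x/2)^(2ν)`, the two sides of the inequality are power series in `q = (x/2)²`: the left one
is `q ∑ qⁿ (c_n(ν+1,ν+1) - c_n(ν,ν+2))` and the right one `(2ν+1)/2 ∑ qⁿ c_n(ν,ν+1)`.
The recurrence of `Γ` gives `c_n(ν+1,ν+1) - c_n(ν,ν+2) = c_n(ν+1,ν+1) / (n+ν+2)`, which is at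
most `(2ν+1)/2 · c_{n+1}(ν,ν+1)` when `ν ≥ 0`. So the left series is dominated termwise by the
right one shifted by one, and the positive constant term of the right one makes the inequality
strict.
-/

open Polynomial Finset
open scoped Nat

namespace Real

theorem ascPochhammer_eval_eq_Gamma_div {z : ℝ} (hz : 0 < z) (k : ℕ) :
    (ascPochhammer ℝ k).eval z = Gamma (z + k) / Gamma z := by
  induction k with
  | zero => simp [(Gamma_pos_of_pos hz).ne']
  | succ k ih =>
    rw [ascPochhammer_succ_eval, ih, Nat.cast_succ, ← add_assoc,
      Gamma_add_one (by positivity : z + k ≠ 0)]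
    ring

theorem choose_add_natCast_eq_Gamma_div {z : ℝ} (hz : -1 < z) (k : ℕ) :
    Ring.choose (z + k) k = Gamma (z + k + 1) / (k ! * Gamma (z + 1)) := by
  rw [Ring.choose_eq_smul, descPochhammer_smeval_eq_ascPochhammer, ascPochhammer_smeval_eq_eval,
    add_sub_cancel_right, ascPochhammer_eval_eq_Gamma_div (by linarith), smul_eq_mul,
    add_right_comm, div_mul_eq_div_div, inv_mul_eq_div, div_right_comm]

theorem Gamma_natCast_add_add_one_pos {a : ℝ} (ha : -1 < a) (n : ℕ) : 0 < Gamma (n + a + 1) :=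
  Gamma_pos_of_pos (by linarith [n.cast_nonneg (α := ℝ)])

end Real

noncomputable def besselProductCoeff (a b : ℝ) (n : ℕ) : ℝ :=
  Gamma (2 * n + a + b + 1) /
    (n ! * Gamma (n + a + 1) * Gamma (n + b + 1) * Gamma (n + a + b + 1))

section BesselProduct

variable {a b : ℝ}

theorem sum_antidiagonal_eq_besselProductCoeff (ha : -1 < a) (hb : -1 < b) (hab : -1 < a + b)
    (n : ℕ) :
    ∑ ij ∈ antidiagonal n, (ij.1 ! * Gamma (ij.1 + a + 1))⁻¹ * (ij.2 ! * Gamma (ij.2 + b + 1))⁻¹ =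
      besselProductCoeff a b n := by
  have hΓa := Gamma_natCast_add_add_one_pos ha n
  have hΓb := Gamma_natCast_add_add_one_pos hb n
  calc _ = ∑ ij ∈ antidiagonal n,
        Ring.choose (n + b : ℝ) ij.1 * Ring.choose (n + a : ℝ) ij.2 /
          (Gamma (n + a + 1) * Gamma (n + b + 1)) := by
        refine sum_congr rfl fun ij hij => ?_
        obtain rfl := mem_antidiagonal.mp hij
        have hi := Gamma_natCast_add_add_one_pos ha ij.1
        have hj := Gamma_natCast_add_add_one_pos hb ij.2
        push_cast at hΓa hΓb ⊢
        rw [show (ij.1 + ij.2 : ℝ) + b = (ij.2 + b) + ij.1 by ring,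
          show (ij.1 + ij.2 : ℝ) + a = (ij.1 + a) + ij.2 by ring,
          choose_add_natCast_eq_Gamma_div (by linarith),
          choose_add_natCast_eq_Gamma_div (by linarith),
          show (ij.2 + b + ij.1 + 1 : ℝ) = ij.1 + ij.2 + b + 1 by ring,
          show (ij.1 + a + ij.2 + 1 : ℝ) = ij.1 + ij.2 + a + 1 by ring]
        field_simp
    _ = Ring.choose (n + a + b + n : ℝ) n / (Gamma (n + a + 1) * Gamma (n + b + 1)) := by
        rw [← sum_div, ← Ring.add_choose_eq n (Commute.all _ _)]
        ring_nf
    _ = besselProductCoeff a b n := by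
        rw [choose_add_natCast_eq_Gamma_div (by linarith [n.cast_nonneg (α := ℝ)]),
          besselProductCoeff, show (n + a + b + n + 1 : ℝ) = 2 * n + a + b + 1 by ring]
        field_simp

theorem summable_pow_div_factorial_mul_Gamma (q : ℝ) (ha : -1 < a) :
    Summable fun m : ℕ => q ^ m / (m ! * Gamma (m + a + 1)) := by
  refine (Real.summable_pow_div_factorial |q|).of_norm_bounded_eventually_nat ?_
  filter_upwards [eventually_ge_atTop 2] with m hm
  have hm' : (2 : ℝ) ≤ m := by exact_mod_cast hm
  have hΓ : 1 ≤ Gamma (m + a + 1) := by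
    calc (1 : ℝ) = Gamma 2 := Real.Gamma_two.symm
      _ ≤ Gamma (m + a + 1) := Real.Gamma_strictMonoOn_Ici.monotoneOn (by simp)
          (by simp only [Set.mem_Ici]; linarith) (by linarith)
  rw [norm_div, norm_mul, norm_pow, Real.norm_eq_abs, Real.norm_natCast,
    Real.norm_of_nonneg (by linarith)]
  exact div_le_div_of_nonneg_left (by positivity) (by positivity)
    (le_mul_of_one_le_right (by positivity) hΓ)

theorem hasSum_pow_mul_besselProductCoeff (q : ℝ) (ha : -1 < a) (hb : -1 < b)
    (hab : -1 < a + b) :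
    HasSum (fun n : ℕ => q ^ n * besselProductCoeff a b n)
      ((∑' m : ℕ, q ^ m / (m ! * Gamma (m + a + 1))) *
        ∑' m : ℕ, q ^ m / (m ! * Gamma (m + b + 1))) := by
  have hf := (summable_pow_div_factorial_mul_Gamma q ha).norm
  have hg := (summable_pow_div_factorial_mul_Gamma q hb).norm
  have hcoeff : ∀ n : ℕ, q ^ n * besselProductCoeff a b n = ∑ kl ∈ antidiagonal n,
      q ^ kl.1 / (kl.1 ! * Gamma (kl.1 + a + 1)) *
        (q ^ kl.2 / (kl.2 ! * Gamma (kl.2 + b + 1))) := by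
    intro n
    rw [← sum_antidiagonal_eq_besselProductCoeff ha hb hab, mul_sum]
    refine sum_congr rfl fun kl hkl => ?_
    rw [← mem_antidiagonal.mp hkl, pow_add]
    ring
  rw [funext hcoeff, tsum_mul_tsum_eq_tsum_sum_antidiagonal_of_summable_norm hf hg]
  exact (summable_norm_sum_mul_antidiagonal_of_summable_norm hf hg).of_norm.hasSum

theorem besselI_eq_rpow_mul_tsum (ν : ℝ) {x : ℝ} (hx : 0 < x) :
    besselI ν x = (x / 2) ^ ν * ∑' m : ℕ, ((x / 2) ^ 2) ^ m / (m ! * Gamma (m + ν + 1)) := by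
  rw [besselI, ← tsum_mul_left]
  refine tsum_congr fun m => ?_
  rw [Real.rpow_add (by positivity), show 2 * (m : ℝ) = (2 * m : ℕ) by push_cast; ring,
    Real.rpow_natCast, pow_mul]
  ring

theorem besselI_mul_besselI (ha : -1 < a) (hb : -1 < b) (hab : -1 < a + b) {x : ℝ} (hx : 0 < x) :
    besselI a x * besselI b x =
      (x / 2) ^ (a + b) * ∑' n : ℕ, ((x / 2) ^ 2) ^ n * besselProductCoeff a b n := by
  rw [besselI_eq_rpow_mul_tsum a hx, besselI_eq_rpow_mul_tsum b hx,
    (hasSum_pow_mul_besselProductCoeff _ ha hb hab).tsum_eq, Real.rpow_add (by positivity)]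
  ring

theorem besselProductCoeff_pos (ha : -1 < a) (hb : -1 < b) (hab : -1 < a + b) (n : ℕ) :
    0 < besselProductCoeff a b n := by
  have := Gamma_natCast_add_add_one_pos ha n
  have := Gamma_natCast_add_add_one_pos hb n
  have : 0 < Gamma (n + a + b + 1) := Gamma_pos_of_pos (by linarith [n.cast_nonneg (α := ℝ)])
  have : 0 < Gamma (2 * n + a + b + 1) := Gamma_pos_of_pos (by linarith [n.cast_nonneg (α := ℝ)])
  rw [besselProductCoeff]
  positivity

theorem besselProductCoeff_add_one_right_mul (ha : -1 < a) (hb : -1 < b) (n : ℕ) :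
    besselProductCoeff a (b + 1) n * (n + b + 1) =
      besselProductCoeff (a + 1) b n * (n + a + 1) := by
  have ha' : 0 < n + a + 1 := by linarith [n.cast_nonneg (α := ℝ)]
  have hb' : 0 < n + b + 1 := by linarith [n.cast_nonneg (α := ℝ)]
  have hΓa := Gamma_pos_of_pos ha'
  have hΓb := Gamma_pos_of_pos hb'
  have hΓab : 0 < Gamma (n + (a + 1) + b + 1) := Gamma_pos_of_pos (by linarith)
  rw [besselProductCoeff, besselProductCoeff,
    show (2 * n + a + (b + 1) + 1 : ℝ) = 2 * n + (a + 1) + b + 1 by ring,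
    show (n + a + (b + 1) + 1 : ℝ) = n + (a + 1) + b + 1 by ring,
    show (n + (b + 1) + 1 : ℝ) = (n + b + 1) + 1 by ring,
    show (n + (a + 1) + 1 : ℝ) = (n + a + 1) + 1 by ring,
    Gamma_add_one ha'.ne', Gamma_add_one hb'.ne']
  field_simp

theorem besselProductCoeff_succ_mul (ha : -1 < a) (hb : -1 < b) (hab : -1 < a + b) (n : ℕ) :
    besselProductCoeff a b (n + 1) * ((n + 1) * (n + b + 1)) =
      besselProductCoeff (a + 1) b n * (2 * n + a + b + 2) := by
  have ha' : 0 < n + a + 1 := by linarith [n.cast_nonneg (α := ℝ)]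
  have hb' : 0 < n + b + 1 := by linarith [n.cast_nonneg (α := ℝ)]
  have hab' : 0 < n + a + b + 1 := by linarith [n.cast_nonneg (α := ℝ)]
  have hΓa := Gamma_pos_of_pos ha'
  have hΓb := Gamma_pos_of_pos hb'
  have hΓab := Gamma_pos_of_pos hab'
  have hΓ2 : 0 < Gamma (2 * n + a + b + 2) := Gamma_pos_of_pos (by linarith)
  rw [besselProductCoeff, besselProductCoeff, Nat.factorial_succ]
  push_cast
  rw [show (2 * (n + 1) + a + b + 1 : ℝ) = (2 * n + a + b + 2) + 1 by ring,
    show (2 * n + (a + 1) + b + 1 : ℝ) = 2 * n + a + b + 2 by ring,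
    show (n + (a + 1) + b + 1 : ℝ) = (n + a + b + 1) + 1 by ring,
    show (n + 1 + a + b + 1 : ℝ) = (n + a + b + 1) + 1 by ring,
    show (n + (a + 1) + 1 : ℝ) = (n + a + 1) + 1 by ring,
    show (n + 1 + a + 1 : ℝ) = (n + a + 1) + 1 by ring,
    show (n + 1 + b + 1 : ℝ) = (n + b + 1) + 1 by ring,
    Gamma_add_one ha'.ne', Gamma_add_one hb'.ne', Gamma_add_one hab'.ne',
    Gamma_add_one (by linarith : (2 * n + a + b + 2 : ℝ) ≠ 0)]
  field_simp

end BesselProduct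

theorem besselProductCoeff_sub_le {ν : ℝ} (hν : 0 ≤ ν) (n : ℕ) :
    besselProductCoeff (ν + 1) (ν + 1) n - besselProductCoeff ν (ν + 2) n ≤
      (2 * ν + 1) / 2 * besselProductCoeff ν (ν + 1) (n + 1) := by
  have hC := besselProductCoeff_pos (a := ν + 1) (b := ν + 1) (by linarith) (by linarith)
    (by linarith) n
  have hB := besselProductCoeff_add_one_right_mul (a := ν) (b := ν + 1) (by linarith)
    (by linarith) n
  have hA := besselProductCoeff_succ_mul (a := ν) (b := ν + 1) (by linarith) (by linarith)
    (by linarith) n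
  rw [show ν + 1 + 1 = ν + 2 by ring] at hB
  have hn := n.cast_nonneg (α := ℝ)
  rw [← eq_div_iff (by positivity)] at hA hB
  calc _ = besselProductCoeff (ν + 1) (ν + 1) n / (n + ν + 2) := by
        rw [hB]; field_simp; ring
    _ ≤ besselProductCoeff (ν + 1) (ν + 1) n / (n + ν + 2) *
          ((2 * ν + 1) * (2 * n + 2 * ν + 3) / (2 * (n + 1))) := by
        refine le_mul_of_one_le_right (by positivity) ?_
        rw [one_le_div (by positivity)]
        nlinarith
    _ = _ := by
        rw [hA]; field_simp; ring

theorem besselI_sq_sub_mul_eq {ν x : ℝ} (hν : -1 < ν) (hx : 0 < x) :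
    besselI (ν + 1) x ^ 2 - besselI ν x * besselI (ν + 2) x = (x / 2) ^ (2 * ν) *
      ((x / 2) ^ 2 * ∑' n : ℕ, ((x / 2) ^ 2) ^ n *
        (besselProductCoeff (ν + 1) (ν + 1) n - besselProductCoeff ν (ν + 2) n)) := by
  rw [sq, besselI_mul_besselI (by linarith) (by linarith) (by linarith) hx,
    besselI_mul_besselI (by linarith) (by linarith) (by linarith) hx,
    show ν + 1 + (ν + 1) = 2 * ν + 2 by ring, show ν + (ν + 2) = 2 * ν + 2 by ring,
    Real.rpow_add (by positivity), Real.rpow_two, ← mul_sub,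
    ← Summable.tsum_sub
      (hasSum_pow_mul_besselProductCoeff _ (by linarith) (by linarith) (by linarith)).summable
      (hasSum_pow_mul_besselProductCoeff _ (by linarith) (by linarith) (by linarith)).summable]
  simp only [mul_sub, mul_assoc]

theorem mul_tsum_pow_mul_lt_tsum_pow_mul {q : ℝ} (hq : 0 ≤ q) {f g : ℕ → ℝ}
    (hf : Summable fun n => q ^ n * f n) (hg : Summable fun n => q ^ n * g n)
    (hfg : ∀ n, f n ≤ g (n + 1)) (hg₀ : 0 < g 0) :
    q * ∑' n, q ^ n * f n < ∑' n, q ^ n * g n := by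
  have hle : ∑' n, q * (q ^ n * f n) ≤ ∑' n, q ^ (n + 1) * g (n + 1) :=
    (hf.mul_left q).tsum_le_tsum (fun n => by
      rw [pow_succ', mul_assoc]
      exact mul_le_mul_of_nonneg_left (mul_le_mul_of_nonneg_left (hfg n) (pow_nonneg hq n)) hq)
      ((summable_nat_add_iff 1).mpr hg)
  rw [hg.tsum_eq_zero_add, ← tsum_mul_left, pow_zero, one_mul]
  linarith

theorem stmt_12 (ν x : ℝ) (hν : 0 ≤ ν) (hx : 0 < x) :
    (besselI (ν + 1) x) ^ 2 - besselI ν x * besselI (ν + 2) x <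
      ((2 * ν + 1) / x) * besselI ν x * besselI (ν + 1) x := by
  set q := (x / 2) ^ 2 with hq
  have hS₁ := (hasSum_pow_mul_besselProductCoeff q (a := ν + 1) (b := ν + 1)
    (by linarith) (by linarith) (by linarith)).summable
  have hS₂ := (hasSum_pow_mul_besselProductCoeff q (a := ν) (b := ν + 2)
    (by linarith) (by linarith) (by linarith)).summable
  have hS₃ := (hasSum_pow_mul_besselProductCoeff q (a := ν) (b := ν + 1)
    (by linarith) (by linarith) (by linarith)).summable
  have hrhs : (2 * ν + 1) / x * besselI ν x * besselI (ν + 1) x = (x / 2) ^ (2 * ν) *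
      ∑' n : ℕ, q ^ n * ((2 * ν + 1) / 2 * besselProductCoeff ν (ν + 1) n) := by
    rw [mul_assoc, besselI_mul_besselI (by linarith) (by linarith) (by linarith) hx, ← hq,
      show ν + (ν + 1) = 2 * ν + 1 by ring, Real.rpow_add (by positivity), Real.rpow_one]
    simp only [mul_left_comm _ ((2 * ν + 1) / 2), tsum_mul_left]
    field_simp
  rw [besselI_sq_sub_mul_eq (by linarith) hx, ← hq, hrhs]
  have hc₀ := besselProductCoeff_pos (a := ν) (b := ν + 1) (by linarith) (by linarith)
    (by linarith) 0
  refine mul_lt_mul_of_pos_left (mul_tsum_pow_mul_lt_tsum_pow_mul (by positivity)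
    (by simpa only [mul_sub] using hS₁.sub hS₂)
    (by simpa only [mul_left_comm] using hS₃.mul_left _)
    (besselProductCoeff_sub_le hν) (by positivity)) (Real.rpow_pos_of_pos (by positivity) _)
end
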